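/- arXiv:1707.05282 — 7 statements merged into one kernel-verified Lean document; each statement's English description precedes it below -/
import Mathlib

section
/- If A is a d×d Hermitian matrix with non-negative diagonal entries and its comparison matrix M(A) is positive semidefinite, then A is positive semidefinite. -/
open Matrix BigOperators ComplexOrder

noncomputable section

/-- comparison matrix: `M(A)_ii = |A_ii|`, `M(A)_ij = -|A_ij|` for `i ≠ j` -/
def compMatrix {d : ℕ} (A : Matrix (Fin d) (Fin d) ℂ) : Matrix (Fin d) (Fin d) ℂ :=
  fun i j => if i = j then (‖A i i‖ : ℂ) else -(‖A i j‖ : ℂ)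

/-! Writing `x*Ax = ∑ᵢⱼ conj xᵢ Aᵢⱼ xⱼ`, each off-diagonal term has real part at least
`-|xᵢ| |Aᵢⱼ| |xⱼ|`, while each diagonal term equals `|xᵢ| |Aᵢᵢ| |xᵢ|` since `Aᵢᵢ ≥ 0`. Hence
`Re (x*Ax) ≥ |x|* M(A) |x| ≥ 0`, and `x*Ax` is real because `A` is Hermitian. -/

open ComplexConjugate

namespace Complex

lemma neg_norm_mul_le_re_conj_mul_mul (x a y : ℂ) :
    -(‖x‖ * ‖a‖ * ‖y‖) ≤ (conj x * a * y).re := by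
  simpa using neg_le_of_abs_le (abs_re_le_norm (conj x * a * y))

lemma re_conj_mul_mul_self_of_nonneg {a : ℂ} (ha : 0 ≤ a) (x : ℂ) :
    (conj x * a * x).re = ‖x‖ * ‖a‖ * ‖x‖ := by
  obtain ⟨r, hr, rfl⟩ := RCLike.nonneg_iff_exists_ofReal.mp ha
  rw [mul_right_comm, mul_comm (conj x), mul_conj]
  simp [normSq_eq_norm_sq, -ofReal_pow, abs_of_nonneg hr]
  ring

end Complex

lemma Matrix.re_star_dotProduct_mulVec {n : Type*} [Fintype n] (A : Matrix n n ℂ) (x : n → ℂ) :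
    (star x ⬝ᵥ A *ᵥ x).re = ∑ i, ∑ j, (conj (x i) * A i j * x j).re := by
  simp [dotProduct, mulVec, Finset.mul_sum, mul_assoc]

section Comparison

variable {d : ℕ} {A : Matrix (Fin d) (Fin d) ℂ}

lemma re_conj_mul_compMatrix_mul_le (hdiag : ∀ i, 0 ≤ A i i) (x : Fin d → ℂ) (i j : Fin d) :
    (conj (‖x i‖ : ℂ) * compMatrix A i j * ‖x j‖).re ≤ (conj (x i) * A i j * x j).re := by
  by_cases hij : i = j
  · subst hij
    rw [Complex.re_conj_mul_mul_self_of_nonneg (hdiag i)]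
    simp [compMatrix, ← Complex.ofReal_mul]
  · simpa [compMatrix, hij, ← Complex.ofReal_mul] using
      Complex.neg_norm_mul_le_re_conj_mul_mul (x i) (A i j) (x j)

lemma re_star_dotProduct_compMatrix_mulVec_norm_le (hdiag : ∀ i, 0 ≤ A i i) (x : Fin d → ℂ) :
    (star (fun i => (‖x i‖ : ℂ)) ⬝ᵥ compMatrix A *ᵥ fun i => (‖x i‖ : ℂ)).re
      ≤ (star x ⬝ᵥ A *ᵥ x).re := by
  rw [re_star_dotProduct_mulVec, re_star_dotProduct_mulVec]
  exact Finset.sum_le_sum fun i _ => Finset.sum_le_sum fun j _ =>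
    re_conj_mul_compMatrix_mul_le hdiag x i j

end Comparison

/-- If a Hermitian matrix with non-negative diagonal has positive semidefinite
comparison matrix, then it is itself positive semidefinite. -/
theorem stmt_1 {d : ℕ} (A : Matrix (Fin d) (Fin d) ℂ) (hA : A.IsHermitian)
    (hdiag : ∀ i, 0 ≤ A i i)
    (hM : (compMatrix A).PosSemidef) :
    A.PosSemidef := by
  refine .of_dotProduct_mulVec_nonneg hA fun x => Complex.nonneg_iff.mpr ⟨?_, ?_⟩
  · have hMnorm := Complex.nonneg_iff.mp (hM.dotProduct_mulVec_nonneg fun i => (‖x i‖ : ℂ))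
    exact hMnorm.1.trans (re_star_dotProduct_compMatrix_mulVec_norm_le hdiag x)
  · exact (hA.im_star_dotProduct_mulVec_self x).symm
end
end

section
/- A Hermitian matrix A with non-negative diagonal has the property that ω∘A is positive semidefinite for every Hermitian matrix ω with all entries of unit modulus and diagonal entries equal to 1, if and only if the comparison matrix M(A) is positive semidefinite. -/
/-!
For unimodular `ω` we have `|ω_ij A_ij| = |A_ij|`, so `ω ∘ A` has the same comparison
matrix as `A`. For any Hermitian `B` with non-negative diagonal, the triangle inequality
applied termwise gives `Re (x* B x) ≥ |x|ᵀ M(B) |x|`, so `M(B) ⪰ 0` forces `B ⪰ 0`.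
Conversely `M(A)` is itself of the form `ω ∘ A`, taking `ω_ij = -conj(A_ij) / |A_ij|`
off the diagonal.
-/

open Matrix BigOperators ComplexOrder

noncomputable section

namespace Complex

/-- The value at `0` is an arbitrary unimodular choice. -/
def unitPhase (z : ℂ) : ℂ := if z = 0 then 1 else z / ‖z‖

@[simp]
lemma norm_unitPhase (z : ℂ) : ‖unitPhase z‖ = 1 := by
  unfold unitPhase
  split_ifs with hz
  · exact norm_one
  · rw [norm_div, norm_real, norm_norm, div_self (norm_ne_zero_iff.mpr hz)]

lemma star_unitPhase (z : ℂ) : star (unitPhase z) = unitPhase (star z) := by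
  simp only [unitPhase, star_eq_zero]
  split_ifs
  · exact star_one ℂ
  · rw [star_div₀, norm_star, Complex.star_def, conj_ofReal]

lemma star_unitPhase_mul_self (z : ℂ) : star (unitPhase z) * z = ‖z‖ := by
  unfold unitPhase
  split_ifs with hz
  · simp [hz]
  · rw [star_div₀, Complex.star_def, conj_ofReal, div_mul_eq_mul_div, conj_mul', sq,
      mul_div_assoc, div_self (ofReal_ne_zero.mpr (norm_ne_zero_iff.mpr hz)), mul_one]

lemma neg_norm_mul_le_re_star_mul (a z b : ℂ) :
    -(‖a‖ * ‖z‖ * ‖b‖) ≤ (star a * (z * b)).re := by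
  have := (abs_le.mp (abs_re_le_norm (star a * (z * b)))).1
  rwa [norm_mul, norm_mul, norm_star, ← mul_assoc] at this

lemma re_star_mul_mul_self_of_nonneg {z : ℂ} (hz : 0 ≤ z) (a : ℂ) :
    (star a * (z * a)).re = ‖z‖ * ‖a‖ ^ 2 := by
  rw [mul_left_comm, Complex.star_def, conj_mul', eq_coe_norm_of_nonneg hz]
  norm_cast
  rw [norm_norm]

end Complex

open Complex

namespace Matrix

section PhaseMatrix

variable {n : Type*} [DecidableEq n]

def comparisonPhase (A : Matrix n n ℂ) : Matrix n n ℂ :=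
  fun i j => if i = j then 1 else -star (unitPhase (A i j))

lemma comparisonPhase_apply_self (A : Matrix n n ℂ) (i : n) : comparisonPhase A i i = 1 :=
  if_pos rfl

lemma norm_comparisonPhase_apply (A : Matrix n n ℂ) (i j : n) :
    ‖comparisonPhase A i j‖ = 1 := by
  unfold comparisonPhase
  split_ifs <;> simp

lemma IsHermitian.comparisonPhase {A : Matrix n n ℂ} (hA : A.IsHermitian) :
    (comparisonPhase A).IsHermitian := by
  ext i j
  by_cases hij : i = j
  · subst hij; simp [comparisonPhase_apply_self]
  · simp only [conjTranspose_apply, Matrix.comparisonPhase, if_neg hij, if_neg (Ne.symm hij)]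
    rw [star_neg, star_star, star_unitPhase, hA.apply j i]

end PhaseMatrix

variable {d : ℕ}

lemma comparisonPhase_hadamard {A : Matrix (Fin d) (Fin d) ℂ} (hdiag : ∀ i, 0 ≤ A i i) :
    comparisonPhase A ⊙ A = compMatrix A := by
  ext i j
  simp only [hadamard_apply, comparisonPhase, compMatrix]
  split_ifs with hij
  · subst hij; rw [one_mul, ← eq_coe_norm_of_nonneg (hdiag i)]
  · rw [neg_mul, star_unitPhase_mul_self]

lemma compMatrix_hadamard_of_norm_eq_one {ω : Matrix (Fin d) (Fin d) ℂ}
    (hω : ∀ i j, ‖ω i j‖ = 1) (A : Matrix (Fin d) (Fin d) ℂ) :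
    compMatrix (ω ⊙ A) = compMatrix A := by
  ext i j
  simp only [compMatrix, hadamard_apply, norm_mul, hω, one_mul]

lemma re_dotProduct_compMatrix_le {B : Matrix (Fin d) (Fin d) ℂ} (hdiag : ∀ i, 0 ≤ B i i)
    (x : Fin d → ℂ) :
    (star (fun i ↦ (‖x i‖ : ℂ)) ⬝ᵥ compMatrix B *ᵥ fun i ↦ (‖x i‖ : ℂ)).re ≤
      (star x ⬝ᵥ B *ᵥ x).re := by
  simp only [dotProduct, mulVec, Finset.mul_sum, re_sum]
  refine Finset.sum_le_sum fun i _ ↦ Finset.sum_le_sum fun j _ ↦ ?_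
  simp only [Pi.star_apply, compMatrix]
  split_ifs with hij
  · subst hij
    rw [re_star_mul_mul_self_of_nonneg (hdiag i)]
    simp only [Complex.star_def, conj_ofReal, ← ofReal_mul, ofReal_re]
    exact le_of_eq (by ring)
  · simpa [mul_assoc] using neg_norm_mul_le_re_star_mul (x i) (B i j) (x j)

lemma IsHermitian.posSemidef_of_compMatrix {B : Matrix (Fin d) (Fin d) ℂ} (hB : B.IsHermitian)
    (hdiag : ∀ i, 0 ≤ B i i) (hM : (compMatrix B).PosSemidef) : B.PosSemidef := by
  refine .of_dotProduct_mulVec_nonneg hB fun x ↦ ?_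
  refine RCLike.nonneg_iff.mpr ⟨?_, hB.im_star_dotProduct_mulVec_self x⟩
  exact (hM.re_dotProduct_nonneg _).trans (re_dotProduct_compMatrix_le hdiag x)

end Matrix

/-- A Hermitian matrix `A` with non-negative diagonal is such that `ω ∘ A` is positive
semidefinite for every Hermitian `ω` with unit-modulus entries and unit diagonal, if and
only if the comparison matrix `M(A)` is positive semidefinite. -/
theorem stmt_2 {d : ℕ} (A : Matrix (Fin d) (Fin d) ℂ) (hA : A.IsHermitian)
    (hdiag : ∀ i, 0 ≤ A i i) :
    (∀ ω : Matrix (Fin d) (Fin d) ℂ, ω.IsHermitian → (∀ i j, ‖ω i j‖ = 1) →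
        (∀ i, ω i i = 1) → (Matrix.hadamard ω A).PosSemidef)
      ↔ (compMatrix A).PosSemidef := by
  refine ⟨fun h ↦ ?_, fun hM ω hω hnorm hone ↦ ?_⟩
  · rw [← comparisonPhase_hadamard hdiag]
    exact h _ hA.comparisonPhase (norm_comparisonPhase_apply A) (comparisonPhase_apply_self A)
  · refine (hω.hadamard hA).posSemidef_of_compMatrix (fun i ↦ ?_) ?_
    · rw [hadamard_apply, hone, one_mul]; exact hdiag i
    · rwa [compMatrix_hadamard_of_norm_eq_one hnorm]
end
end

section
/- If a density matrix ρ on C^d satisfies ρ ≥ ((d−k)/(d−1)) Δ(ρ), where Δ is the fully dephasing map, then ρ ∈ C_k (ρ has coherence number at most k). -/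
open Matrix BigOperators ComplexOrder

noncomputable section

/-- coherence rank of a vector: number of nonzero coefficients in the fixed basis -/
def cohRank {d : ℕ} (v : Fin d → ℂ) : ℕ :=
  (Finset.univ.filter (fun i => v i ≠ 0)).card

/-- projector onto the pure state with coefficient vector `v` -/
def pureProj {d : ℕ} (v : Fin d → ℂ) : Matrix (Fin d) (Fin d) ℂ :=
  Matrix.vecMulVec v (star v)

/-- the set `C_k`: convex hull of pure-state projectors with coherence rank ≤ k -/
def Ck (d k : ℕ) : Set (Matrix (Fin d) (Fin d) ℂ) :=
  convexHull ℝ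
    {M | ∃ v : Fin d → ℂ, (∑ i, ‖v i‖ ^ 2 = 1) ∧ cohRank v ≤ k ∧ M = pureProj v}

/-- density matrix predicate -/
def IsDensity {d : ℕ} (ρ : Matrix (Fin d) (Fin d) ℂ) : Prop :=
  ρ.PosSemidef ∧ ρ.trace = 1

/-- robustness of (k+1)-level coherence -/
def RMC {d : ℕ} (k : ℕ) (ρ : Matrix (Fin d) (Fin d) ℂ) : ℝ :=
  sInf {s : ℝ | 0 ≤ s ∧ ∃ τ : Matrix (Fin d) (Fin d) ℂ, IsDensity τ ∧
    ((1 + s)⁻¹ : ℝ) • (ρ + (s : ℝ) • τ) ∈ Ck d k}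

/-- fully dephasing map in the fixed basis -/
def deph {d : ℕ} (ρ : Matrix (Fin d) (Fin d) ℂ) : Matrix (Fin d) (Fin d) ℂ :=
  Matrix.diagonal (fun i => ρ i i)

/-! Put `t = (d - k)/(d - 1)` and `Y = ρ - t Δ(ρ) ≥ 0`. Summing the compressions `P_S Y P_S` over
all `k`-subsets `S` of the basis counts each diagonal entry `C(d-1, k-1)` times and each
off-diagonal entry `C(d-2, k-2)` times; as `C(d-1, k-1) (1 - t) = C(d-2, k-2)`, the sum is
`C(d-2, k-2) ρ`. Each compression is positive semidefinite and supported on `k` basis vectors, hence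
a sum of rank-one projectors of coherence rank `≤ k`, and normalising them by their traces writes `ρ`
as a convex combination of pure states in `C_k`. For `k = 1 < d` the hypothesis reads `ρ ≥ Δ(ρ)`, which
forces `ρ = Δ(ρ)`, and the singletons `S` do the job. -/

open Finset

section PureProj

variable {d : ℕ}

lemma pureProj_apply (v : Fin d → ℂ) (i j : Fin d) : pureProj v i j = v i * star (v j) := rfl

lemma pureProj_apply_self (v : Fin d → ℂ) (j : Fin d) :
    pureProj v j j = ((‖v j‖ ^ 2 : ℝ) : ℂ) := by
  rw [pureProj_apply, Complex.star_def, Complex.mul_conj, Complex.normSq_eq_norm_sq]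

lemma trace_pureProj (v : Fin d → ℂ) : (pureProj v).trace = ((∑ j, ‖v j‖ ^ 2 : ℝ) : ℂ) := by
  simp only [Matrix.trace, diag_apply, pureProj_apply_self, Complex.ofReal_sum]

lemma pureProj_smul (c : ℂ) (v : Fin d → ℂ) : pureProj (c • v) = (‖c‖ ^ 2 : ℝ) • pureProj v := by
  ext i j
  simp only [pureProj_apply, Pi.smul_apply, smul_eq_mul, star_mul', Matrix.smul_apply,
    Complex.real_smul]
  rw [Complex.ofReal_pow, ← Complex.mul_conj', ← Complex.star_def]
  ring

lemma cohRank_smul {c : ℂ} (hc : c ≠ 0) (v : Fin d → ℂ) : cohRank (c • v) = cohRank v := by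
  simp [cohRank, hc]

lemma cohRank_le_card {v : Fin d → ℂ} {S : Finset (Fin d)} (hv : ∀ j ∉ S, v j = 0) :
    cohRank v ≤ #S :=
  card_le_card fun j hj => by_contra fun hjS => (mem_filter.1 hj).2 (hv j hjS)

lemma exists_pureProj_eq_smul_normalized {v : Fin d → ℂ} (hv : v ≠ 0) :
    ∃ u : Fin d → ℂ, ∑ j, ‖u j‖ ^ 2 = 1 ∧ cohRank u = cohRank v ∧
      pureProj v = (∑ j, ‖v j‖ ^ 2) • pureProj u := by
  set n := ∑ j, ‖v j‖ ^ 2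
  have hn : 0 < n := by
    obtain ⟨j, hj⟩ := Function.ne_iff.1 hv
    exact lt_of_lt_of_le (by positivity) (single_le_sum (fun i _ => sq_nonneg ‖v i‖) (mem_univ j))
  have hc : ‖((√n)⁻¹ : ℂ)‖ ^ 2 = n⁻¹ := by
    rw [norm_inv, Complex.norm_real, Real.norm_of_nonneg (Real.sqrt_nonneg n), inv_pow,
      Real.sq_sqrt hn.le]
  refine ⟨((√n)⁻¹ : ℂ) • v, ?_, cohRank_smul (by simp [(Real.sqrt_pos.2 hn).ne']) v, ?_⟩
  · simp only [Pi.smul_apply, smul_eq_mul, norm_mul, mul_pow, ← mul_sum, hc]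
    exact inv_mul_cancel₀ hn.ne'
  · rw [pureProj_smul, hc, smul_smul, mul_inv_cancel₀ hn.ne', one_smul]

end PureProj

lemma sum_pureProj_mem_Ck {d k : ℕ} {ι : Type*} (t : Finset ι) (v : ι → Fin d → ℂ)
    (hv : ∀ i ∈ t, cohRank (v i) ≤ k) (htr : (∑ i ∈ t, pureProj (v i)).trace = 1) :
    ∑ i ∈ t, pureProj (v i) ∈ Ck d k := by
  classical
  set t' := t.filter fun i => v i ≠ 0
  choose! u hu_norm hu_rank hu_eq using fun i (hi : i ∈ t') =>
    exists_pureProj_eq_smul_normalized (mem_filter.1 hi).2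
  have hsum : ∑ i ∈ t, pureProj (v i) = ∑ i ∈ t', (∑ j, ‖v i j‖ ^ 2) • pureProj (u i) := by
    rw [← sum_filter_of_ne (p := fun i => v i ≠ 0) fun i _ h hvi =>
      h (by rw [hvi]; ext; simp [pureProj_apply])]
    exact sum_congr rfl hu_eq
  have hweights : ∑ i ∈ t', ∑ j, ‖v i j‖ ^ 2 = 1 := by
    rw [hsum, trace_sum, sum_congr rfl fun i hi => by
      rw [trace_smul, trace_pureProj, hu_norm i hi, Complex.ofReal_one, Complex.real_smul, mul_one]]
      at htr
    exact_mod_cast htr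
  rw [hsum]
  exact (convex_convexHull ℝ _).sum_mem (fun i _ => by positivity) hweights fun i hi =>
    subset_convexHull ℝ _
      ⟨u i, hu_norm i hi, (hu_rank i hi).trans_le (hv i (mem_filter.1 hi).1), rfl⟩

section Compress

variable {n : Type*} [Fintype n] [DecidableEq n]

def compress (S : Finset n) (X : Matrix n n ℂ) : Matrix n n ℂ :=
  diagonal (fun i => if i ∈ S then 1 else 0) * X * diagonal (fun i => if i ∈ S then 1 else 0)

lemma compress_apply (S : Finset n) (X : Matrix n n ℂ) (i j : n) :
    compress S X i j = if i ∈ S ∧ j ∈ S then X i j else 0 := by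
  by_cases hi : i ∈ S <;> by_cases hj : j ∈ S <;> simp [compress, hi, hj]

lemma Matrix.PosSemidef.compress {X : Matrix n n ℂ} (hX : X.PosSemidef) (S : Finset n) :
    (_root_.compress S X).PosSemidef := by
  have h := hX.mul_mul_conjTranspose_same (diagonal fun i => if i ∈ S then (1 : ℂ) else 0)
  rwa [diagonal_conjTranspose, show (star fun i => if i ∈ S then (1 : ℂ) else 0) =
    fun i => if i ∈ S then 1 else 0 by ext i; by_cases hi : i ∈ S <;> simp [hi]] at h

lemma compress_smul (S : Finset n) (c : ℝ) (X : Matrix n n ℂ) :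
    compress S (c • X) = c • compress S X := by
  ext i j
  simp only [compress_apply, Matrix.smul_apply]
  split_ifs <;> simp

lemma sum_compress_singleton (X : Matrix n n ℂ) : ∑ i, compress {i} X = diagonal fun i => X i i := by
  ext i j
  by_cases h : i = j
  · subst h; simp [Matrix.sum_apply, compress_apply]
  · simp only [Matrix.sum_apply, compress_apply, mem_singleton, diagonal_apply_ne _ h]
    exact sum_eq_zero fun l _ => if_neg fun ⟨hi, hj⟩ => h (hi.trans hj.symm)

lemma sum_compress_powersetCard_apply (k : ℕ) (X : Matrix n n ℂ) (i j : n) :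
    (∑ S ∈ powersetCard k univ, compress S X) i j =
      #{S ∈ powersetCard k univ | {i, j} ⊆ S} * X i j := by
  simp only [Matrix.sum_apply, compress_apply, insert_subset_iff, singleton_subset_iff]
  rw [← sum_filter, sum_const, nsmul_eq_mul]

end Compress

lemma sum_compress_mem_Ck {d k : ℕ} {ι : Type*} (T : Finset ι) (S : ι → Finset (Fin d))
    (X : ι → Matrix (Fin d) (Fin d) ℂ) (hX : ∀ t ∈ T, (X t).PosSemidef)
    (hS : ∀ t ∈ T, #(S t) ≤ k) (htr : (∑ t ∈ T, compress (S t) (X t)).trace = 1) :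
    ∑ t ∈ T, compress (S t) (X t) ∈ Ck d k := by
  choose! m v hv using fun t (ht : t ∈ T) =>
    posSemidef_iff_eq_sum_vecMulVec.1 ((hX t ht).compress (S t))
  have hsum : ∑ t ∈ T, compress (S t) (X t) =
      ∑ p ∈ T.sigma fun t => (univ : Finset (Fin (m t))), pureProj (v p.1 p.2) := by
    rw [sum_sigma]
    exact sum_congr rfl hv
  rw [hsum] at htr ⊢
  refine sum_pureProj_mem_Ck _ _ (fun p hp => ?_) htr
  obtain ⟨ht, -⟩ := mem_sigma.1 hp
  refine (cohRank_le_card fun j hj => ?_).trans (hS _ ht)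
  have hjj : ∑ l, ‖v p.1 l j‖ ^ 2 = 0 := by
    have h := congrFun (congrFun (hv p.1 ht) j) j
    rw [compress_apply, if_neg fun h => hj h.1, Matrix.sum_apply] at h
    simp_rw [← pureProj.eq_1, pureProj_apply_self] at h
    exact_mod_cast h.symm
  simpa using (sum_eq_zero_iff_of_nonneg fun l _ => sq_nonneg _).1 hjj p.2 (mem_univ _)

lemma sum_compress_sub_smul_deph {d k : ℕ} (hk : 2 ≤ k) (hkd : k ≤ d)
    (ρ : Matrix (Fin d) (Fin d) ℂ) :
    ∑ S ∈ powersetCard k univ, compress S (ρ - (((d : ℝ) - k) / ((d : ℝ) - 1)) • deph ρ) =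
      ((d - 2).choose (k - 2) : ℝ) • ρ := by
  have hpair : (d - 1) * (d - 2).choose (k - 2) = (d - 1).choose (k - 1) * (k - 1) := by
    have := Nat.add_one_mul_choose_eq (d - 2) (k - 2)
    rwa [show d - 2 + 1 = d - 1 by omega, show k - 2 + 1 = k - 1 by omega] at this
  ext i j
  rw [sum_compress_powersetCard_apply, Matrix.smul_apply, Complex.real_smul]
  by_cases h : i = j
  · subst h
    rw [pair_eq_singleton, card_filter_powersetCard_subset _ _ _ (subset_univ _) (by simp; omega),
      card_univ, Fintype.card_fin, card_singleton]
    have hcoef : ((d - 1).choose (k - 1) : ℝ) * (1 - ((d : ℝ) - k) / ((d : ℝ) - 1)) =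
        (d - 2).choose (k - 2) := by
      have hd : (d : ℝ) - 1 ≠ 0 := sub_ne_zero.2 (by norm_cast; omega)
      have := congrArg (Nat.cast (R := ℝ)) hpair
      push_cast [Nat.cast_sub (by omega : 1 ≤ d), Nat.cast_sub (by omega : 1 ≤ k)] at this
      field_simp
      linarith
    simp only [deph, Matrix.sub_apply, Matrix.smul_apply, diagonal_apply_eq, Complex.real_smul]
    rw [← hcoef]
    push_cast
    ring
  · rw [card_filter_powersetCard_subset _ _ _ (subset_univ _) (by rw [card_pair h]; omega),
      card_univ, Fintype.card_fin, card_pair h]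
    simp [deph, Matrix.sub_apply, h]

lemma eq_deph_of_posSemidef_sub_deph {d : ℕ} {X : Matrix (Fin d) (Fin d) ℂ}
    (hX : (X - deph X).PosSemidef) : X = deph X :=
  sub_eq_zero.1 <| hX.trace_eq_zero_iff.1 <| by simp [deph, Matrix.trace]

/-- If `ρ ≥ ((d-k)/(d-1)) Δ(ρ)` then `ρ ∈ C_k`. -/
theorem stmt_8 {d k : ℕ} (hk : 1 ≤ k) (hkd : k ≤ d)
    (ρ : Matrix (Fin d) (Fin d) ℂ) (hρ : IsDensity ρ)
    (hcond : (ρ - ((((d : ℝ) - k) / ((d : ℝ) - 1)) • deph ρ)).PosSemidef) :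
    ρ ∈ Ck d k := by
  obtain ⟨hpsd, htr⟩ := hρ
  rcases (by omega : k = 1 ∨ 2 ≤ k) with rfl | hk2
  · have hdiag : ρ = ∑ i, compress {i} ρ := by
      rw [sum_compress_singleton, ← deph]
      rcases (by omega : d = 1 ∨ 2 ≤ d) with rfl | hd
      · ext i j
        rw [Subsingleton.elim i j]
        simp [deph]
      · refine eq_deph_of_posSemidef_sub_deph ?_
        rwa [Nat.cast_one, div_self (sub_ne_zero.2 (by norm_cast; omega)), one_smul] at hcond
    rw [hdiag] at htr ⊢
    exact sum_compress_mem_Ck _ _ _ (fun _ _ => hpsd) (fun _ _ => (card_singleton _).le) htr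
  · set b : ℝ := (((d - 2).choose (k - 2) : ℕ) : ℝ)
    have hb : 0 < b := Nat.cast_pos.2 (Nat.choose_pos (by omega))
    have hsum : ρ = ∑ S ∈ powersetCard k univ,
        compress S (b⁻¹ • (ρ - (((d : ℝ) - k) / ((d : ℝ) - 1)) • deph ρ)) := by
      rw [sum_congr rfl fun S _ => compress_smul S b⁻¹ _, ← smul_sum,
        sum_compress_sub_smul_deph hk2 hkd, smul_smul, inv_mul_cancel₀ hb.ne', one_smul]
    rw [hsum] at htr ⊢
    exact sum_compress_mem_Ck _ id _ (fun _ _ => hcond.smul (inv_nonneg.2 hb.le))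
      (fun _ hS => (mem_powersetCard.1 hS).2.le) htr
end
end

section
/- The k-dephasing map Δ_k(ρ) = (1/C(d−1,k−1)) Σ_{I ⊆ {1,…,d}, |I|=k} P_I ρ P_I satisfies Δ_k(ρ) = ((k−1)/(d−1)) ρ + ((d−k)/(d−1)) Δ_1(ρ), where P_I = Σ_{i∈I} |i⟩⟨i| and Δ_1 is the fully dephasing map. -/
open Matrix BigOperators ComplexOrder

noncomputable section

/-- projector onto the span of basis vectors indexed by `I` -/
def projP {d : ℕ} (I : Finset (Fin d)) : Matrix (Fin d) (Fin d) ℂ :=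
  Matrix.diagonal (fun i => if i ∈ I then 1 else 0)

/-- the k-dephasing map -/
def kDeph {d : ℕ} (k : ℕ) (ρ : Matrix (Fin d) (Fin d) ℂ) : Matrix (Fin d) (Fin d) ℂ :=
  ((Nat.choose (d - 1) (k - 1) : ℂ))⁻¹ •
    ∑ I ∈ Finset.powersetCard k (Finset.univ : Finset (Fin d)), projP I * ρ * projP I

/-!
Entrywise, `P_I ρ P_I` keeps `ρ i j` exactly when `{i, j} ⊆ I`, so `Δ_k(ρ) i j` is `ρ i j`
times the number of `k`-subsets containing `{i, j}`, divided by `C(d-1, k-1)`. For `i = j` that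
number is `C(d-1, k-1)`; for `i ≠ j` it is `C(d-2, k-2)`, and
`(d-1) C(d-2, k-2) = (k-1) C(d-1, k-1)`.
-/

open Finset

section Counting

variable {α : Type*} [Fintype α] [DecidableEq α]

lemma card_powersetCard_filter_singleton_subset {k : ℕ} (hk : 1 ≤ k) (a : α) :
    #{I ∈ powersetCard k (univ : Finset α) | {a} ⊆ I} =
      (Fintype.card α - 1).choose (k - 1) := by
  simpa using card_filter_powersetCard_subset {a} univ k (subset_univ _) (by simpa using hk)

lemma card_sub_one_mul_card_powersetCard_filter_pair_subset (k : ℕ) {a b : α} (hab : a ≠ b) :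
    (Fintype.card α - 1) * #{I ∈ powersetCard k (univ : Finset α) | {a, b} ⊆ I} =
      (k - 1) * (Fintype.card α - 1).choose (k - 1) := by
  have hpair : #{a, b} = 2 := card_pair hab
  rcases lt_or_ge k 2 with hk | hk
  · have hempty : {I ∈ powersetCard k (univ : Finset α) | {a, b} ⊆ I} = ∅ := by
      refine filter_eq_empty_iff.mpr fun I hI hsub => ?_
      have := card_le_card hsub
      rw [hpair, (mem_powersetCard.mp hI).2] at this
      omega
    simp [hempty, show k - 1 = 0 by omega]
  · obtain ⟨m, rfl⟩ := Nat.exists_eq_add_of_le' hk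
    obtain ⟨n, hn⟩ : ∃ n, Fintype.card α = n + 2 :=
      ⟨Fintype.card α - 2, by have := card_le_univ ({a, b} : Finset α); omega⟩
    rw [card_filter_powersetCard_subset _ _ _ (subset_univ _) (by omega), hpair, card_univ, hn]
    simpa [mul_comm] using Nat.add_one_mul_choose_eq n m

end Counting

lemma projP_mul_mul_projP_apply {d : ℕ} (I : Finset (Fin d)) (ρ : Matrix (Fin d) (Fin d) ℂ)
    (i j : Fin d) : (projP I * ρ * projP I) i j = if {i, j} ⊆ I then ρ i j else 0 := by
  by_cases hi : i ∈ I <;> by_cases hj : j ∈ I <;>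
    simp [projP, mul_diagonal, diagonal_mul, insert_subset_iff, hi, hj]

lemma kDeph_apply {d : ℕ} (k : ℕ) (ρ : Matrix (Fin d) (Fin d) ℂ) (i j : Fin d) :
    kDeph k ρ i j =
      (#{I ∈ powersetCard k univ | {i, j} ⊆ I} / (d - 1).choose (k - 1) : ℂ) * ρ i j := by
  simp only [kDeph, Matrix.smul_apply, Matrix.sum_apply, projP_mul_mul_projP_apply,
    ← sum_filter, sum_const, nsmul_eq_mul]
  ring

/-- `Δ_k(ρ) = ((k-1)/(d-1)) ρ + ((d-k)/(d-1)) Δ_1(ρ)`. -/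
theorem stmt_9 {d k : ℕ} (hd : 2 ≤ d) (hk : 1 ≤ k) (hkd : k ≤ d)
    (ρ : Matrix (Fin d) (Fin d) ℂ) :
    kDeph k ρ = ((((k : ℂ) - 1) / ((d : ℂ) - 1)) • ρ) +
      ((((d : ℂ) - (k : ℂ)) / ((d : ℂ) - 1)) • deph ρ) := by
  have hchoose : ((d - 1).choose (k - 1) : ℂ) ≠ 0 :=
    Nat.cast_ne_zero.mpr (Nat.choose_pos (by omega)).ne'
  have hd1 : (d : ℂ) - 1 ≠ 0 := sub_ne_zero.mpr (by exact_mod_cast (by omega : d ≠ 1))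
  ext i j
  rw [kDeph_apply, Matrix.add_apply, Matrix.smul_apply, Matrix.smul_apply, deph, smul_eq_mul,
    smul_eq_mul]
  obtain rfl | hij := eq_or_ne i j
  · rw [pair_eq_singleton, card_powersetCard_filter_singleton_subset hk, Fintype.card_fin,
      diagonal_apply_eq]
    field_simp
    ring
  · have hcount : ((d : ℂ) - 1) * #{I ∈ powersetCard k univ | {i, j} ⊆ I} =
        ((k : ℂ) - 1) * (d - 1).choose (k - 1) := by
      have hnat := card_sub_one_mul_card_powersetCard_filter_pair_subset k hij
      rw [Fintype.card_fin] at hnat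
      have hcast := congrArg (Nat.cast : ℕ → ℂ) hnat
      push_cast [Nat.cast_sub (by omega : 1 ≤ d), Nat.cast_sub hk] at hcast
      exact hcast
    rw [diagonal_apply_ne _ hij]
    field_simp
    linear_combination ρ i j * hcount
end
end

section
/- If W is Hermitian and P_I W P_I ≥ 0 for every k-element subset I of the fixed basis indices, then W has at most d−k negative eigenvalues (counting multiplicity). -/
open Matrix BigOperators ComplexOrder

/-!
Let `N` be the span of the eigenvectors of `W` with negative eigenvalues: its dimension is the
number of negative eigenvalues, and the quadratic form `x ↦ x⋆ W x` is negative definite on it.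
For any `k`-subset `I`, the hypothesis `P_I W P_I ≥ 0` makes the form nonnegative on the
`k`-dimensional coordinate subspace `range P_I`. Hence `N` meets `range P_I` trivially, and
`dim N + k ≤ d`.
-/

noncomputable section

namespace Matrix

variable {n : Type*} [Fintype n]

lemma star_mulVec_dotProduct_mulVec_mulVec (A B : Matrix n n ℂ) (y : n → ℂ) :
    star (B *ᵥ y) ⬝ᵥ A *ᵥ (B *ᵥ y) = star y ⬝ᵥ (Bᴴ * A * B) *ᵥ y := by
  rw [star_mulVec, ← dotProduct_mulVec, mulVec_mulVec, mulVec_mulVec, Matrix.mul_assoc]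

lemma PosSemidef.star_dotProduct_mulVec_nonneg_of_mem_range {A B : Matrix n n ℂ}
    (h : (Bᴴ * A * B).PosSemidef) {x : n → ℂ} (hx : x ∈ LinearMap.range B.mulVecLin) :
    0 ≤ star x ⬝ᵥ A *ᵥ x := by
  obtain ⟨y, rfl⟩ := hx
  rw [mulVecLin_apply, star_mulVec_dotProduct_mulVec_mulVec]
  exact h.dotProduct_mulVec_nonneg y

variable [DecidableEq n]

lemma star_dotProduct_diagonal_mulVec (f : n → ℝ) (y : n → ℂ) :
    star y ⬝ᵥ diagonal (RCLike.ofReal ∘ f) *ᵥ y =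
      ((∑ i, f i * Complex.normSq (y i) : ℝ) : ℂ) := by
  simp only [dotProduct, mulVec_diagonal, Pi.star_apply, Function.comp_apply, Complex.ofReal_sum,
    Complex.ofReal_mul, ← Complex.mul_conj, RCLike.star_def]
  refine Finset.sum_congr rfl fun i _ => ?_
  -- `RCLike.ofReal` and the coercion `ℝ → ℂ` agree only up to unfolding, which `ring` does not do
  change starRingEnd ℂ (y i) * ((f i : ℂ) * y i) = _
  ring

namespace IsHermitian

variable {A : Matrix n n ℂ} (hA : A.IsHermitian)

lemma star_eigenvectorUnitary_mul_mul_eigenvectorUnitary :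
    (hA.eigenvectorUnitary : Matrix n n ℂ)ᴴ * A * (hA.eigenvectorUnitary : Matrix n n ℂ) =
      diagonal (RCLike.ofReal ∘ hA.eigenvalues) := by
  simpa [Unitary.conjStarAlgAut_apply, star_eq_conjTranspose] using
    hA.conjStarAlgAut_star_eigenvectorUnitary

lemma star_dotProduct_mulVec_eigenvectorUnitary_mulVec (y : n → ℂ) :
    star (hA.eigenvectorUnitary *ᵥ y) ⬝ᵥ A *ᵥ (hA.eigenvectorUnitary *ᵥ y) =
      ((∑ i, hA.eigenvalues i * Complex.normSq (y i) : ℝ) : ℂ) := by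
  rw [star_mulVec_dotProduct_mulVec_mulVec, star_eigenvectorUnitary_mul_mul_eigenvectorUnitary,
    star_dotProduct_diagonal_mulVec]

/-- The span of the eigenvectors with negative eigenvalues. -/
def negativeSubspace : Submodule ℂ (n → ℂ) :=
  LinearMap.range ((hA.eigenvectorUnitary : Matrix n n ℂ) *
    diagonal (fun i => if hA.eigenvalues i < 0 then 1 else 0)).mulVecLin

lemma finrank_negativeSubspace :
    Module.finrank ℂ hA.negativeSubspace =
      (Finset.univ.filter fun i => hA.eigenvalues i < 0).card := by
  have hU : IsUnit (hA.eigenvectorUnitary : Matrix n n ℂ).det :=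
    (isUnit_iff_isUnit_det _).mp (Unitary.toUnits hA.eigenvectorUnitary).isUnit
  rw [negativeSubspace, ← rank, rank_mul_eq_right_of_isUnit_det _ _ hU, rank_diagonal]
  simp [Fintype.card_subtype]

lemma star_dotProduct_mulVec_neg_of_mem_negativeSubspace {x : n → ℂ}
    (hx : x ∈ hA.negativeSubspace) (hx0 : x ≠ 0) : star x ⬝ᵥ A *ᵥ x < 0 := by
  obtain ⟨c, rfl⟩ := hx
  rw [mulVecLin_apply, ← mulVec_mulVec] at hx0 ⊢
  set y := diagonal (fun i => if hA.eigenvalues i < 0 then 1 else 0) *ᵥ c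
  have hy : ∀ j, y j ≠ 0 → hA.eigenvalues j < 0 := fun j hj => by
    by_contra h
    simp [y, mulVec_diagonal, h] at hj
  obtain ⟨i, hi⟩ : ∃ i, y i ≠ 0 := by
    by_contra! h
    exact hx0 (by rw [show y = 0 from funext h, mulVec_zero])
  have hsum : ∑ j, hA.eigenvalues j * Complex.normSq (y j) < 0 := by
    refine Finset.sum_neg' (fun j _ => ?_) ⟨i, Finset.mem_univ i, ?_⟩
    · by_cases hj : y j = 0
      · simp [hj]
      · exact mul_nonpos_of_nonpos_of_nonneg (hy j hj).le (Complex.normSq_nonneg _)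
    · exact mul_neg_of_neg_of_pos (hy i hi) (Complex.normSq_pos.mpr hi)
  rw [star_dotProduct_mulVec_eigenvectorUnitary_mulVec]
  exact_mod_cast hsum

theorem card_neg_eigenvalues_add_finrank_le (V : Submodule ℂ (n → ℂ))
    (hV : ∀ x ∈ V, 0 ≤ star x ⬝ᵥ A *ᵥ x) :
    (Finset.univ.filter fun i => hA.eigenvalues i < 0).card + Module.finrank ℂ V ≤
      Fintype.card n := by
  have hdisj : Disjoint hA.negativeSubspace V := by
    refine Submodule.disjoint_def.mpr fun x hxN hxV => by_contra fun hx0 => ?_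
    exact (hV x hxV).not_gt (hA.star_dotProduct_mulVec_neg_of_mem_negativeSubspace hxN hx0)
  simpa [finrank_negativeSubspace] using Submodule.finrank_add_finrank_le_of_disjoint hdisj

end IsHermitian

end Matrix

lemma projP_conjTranspose {d : ℕ} (I : Finset (Fin d)) : (projP I)ᴴ = projP I := by
  rw [projP, diagonal_conjTranspose]
  congr 1
  ext i
  split_ifs <;> simp [*]

lemma rank_projP {d : ℕ} (I : Finset (Fin d)) : (projP I).rank = I.card := by
  rw [projP, rank_diagonal]
  simp [Fintype.card_subtype]

theorem stmt_12_general {d k : ℕ} (hkd : k ≤ d)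
    (W : Matrix (Fin d) (Fin d) ℂ) (hW : W.IsHermitian)
    (hwit : ∀ I : Finset (Fin d), I.card = k → (projP I * W * projP I).PosSemidef) :
    (Finset.univ.filter (fun i => hW.eigenvalues i < 0)).card ≤ d - k := by
  obtain ⟨I, -, hI⟩ := (Finset.univ : Finset (Fin d)).exists_subset_card_eq (n := k)
    (by simpa using hkd)
  have hV : ∀ x ∈ LinearMap.range (projP I).mulVecLin, 0 ≤ star x ⬝ᵥ W *ᵥ x := fun x hx =>
    PosSemidef.star_dotProduct_mulVec_nonneg_of_mem_range
      (by rw [projP_conjTranspose]; exact hwit I hI) hx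
  have hbound := hW.card_neg_eigenvalues_add_finrank_le _ hV
  rw [← rank, rank_projP, hI, Fintype.card_fin] at hbound
  omega

/-- If `P_I W P_I ≥ 0` for every `k`-element subset `I`, then `W` has at most `d - k`
negative eigenvalues (counting multiplicity). -/
theorem stmt_12 {d k : ℕ} (hk : 1 ≤ k) (hkd : k ≤ d)
    (W : Matrix (Fin d) (Fin d) ℂ) (hW : W.IsHermitian)
    (hwit : ∀ I : Finset (Fin d), I.card = k → (projP I * W * projP I).PosSemidef) :
    (Finset.univ.filter (fun i => hW.eigenvalues i < 0)).card ≤ d - k :=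
  stmt_12_general hkd W hW hwit
end
end

section
/- For any unit vector |ψ⟩ = Σ_i c_i|i⟩ in C^d and any pure state |φ⟩ with coherence rank at most k, |⟨φ|ψ⟩|² ≤ Σ_{i=1}^k |c_i↓|², where c_i↓ are the coefficients reordered by non-increasing modulus; moreover this bound is attained. -/
/-!
On the support of `φ`, which has at most `k` elements, Cauchy–Schwarz bounds `|⟨φ|ψ⟩|²` by the
weight of `ψ` on that support, and no `k` coordinates carry more weight than those of the `k`
largest `|cᵢ|`. The normalized restriction of `ψ` to these coordinates attains the bound.
-/

open Matrix BigOperators ComplexOrder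

noncomputable section

/-- the squared moduli of the coefficients of `c`, sorted in non-increasing order -/
def sortedAbsSq {d : ℕ} (c : Fin d → ℂ) : Fin d → ℝ :=
  fun i => ‖c (Tuple.sort (fun j => -‖c j‖ ^ 2) i)‖ ^ 2

/-- sum of the `k` largest squared moduli of the coefficients of `c` -/
def topk {d : ℕ} (c : Fin d → ℂ) (k : ℕ) : ℝ :=
  ∑ i ∈ Finset.univ.filter (fun i : Fin d => (i : ℕ) < k), sortedAbsSq c i

open Finset

lemma Fin.val_le_of_strictMono {m n : ℕ} {g : Fin m → Fin n} (hg : StrictMono g) (i : Fin m) :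
    (i : ℕ) ≤ g i := by
  obtain ⟨i, hi⟩ := i
  induction i with
  | zero => exact Nat.zero_le _
  | succ i ih => exact (ih (by omega)).trans_lt (hg (Fin.mk_lt_mk.2 i.lt_succ_self))

lemma Finset.sum_le_sum_filter_val_lt_of_antitone {M : Type*} [AddCommMonoid M] [PartialOrder M]
    [IsOrderedAddMonoid M] {d k : ℕ} {f : Fin d → M} (hf : Antitone f) (hf0 : ∀ i, 0 ≤ f i)
    (T : Finset (Fin d)) (hT : #T ≤ k) :
    ∑ i ∈ T, f i ≤ ∑ i ∈ univ.filter (fun i : Fin d ↦ (i : ℕ) < k), f i := by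
  set e := T.orderEmbOfFin rfl
  have hTd : #T ≤ d := by simpa using card_le_univ T
  calc ∑ i ∈ T, f i = ∑ i ∈ univ.map e.toEmbedding, f i := by rw [map_orderEmbOfFin_univ]
    _ = ∑ j, f (e j) := sum_map _ _ _
    _ ≤ ∑ j, f (Fin.castLE hTd j) :=
        sum_le_sum fun j _ ↦ hf (Fin.val_le_of_strictMono e.strictMono j)
    _ = ∑ i ∈ univ.map (Fin.castLEEmb hTd), f i := by rw [sum_map]; rfl
    _ ≤ ∑ i ∈ univ.filter (fun i : Fin d ↦ (i : ℕ) < k), f i := by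
        refine sum_le_sum_of_subset_of_nonneg ?_ fun i _ _ ↦ hf0 i
        intro i hi
        obtain ⟨j, -, rfl⟩ := mem_map.1 hi
        simpa using j.2.trans_le hT

lemma antitone_sortedAbsSq {d : ℕ} (c : Fin d → ℂ) : Antitone (sortedAbsSq c) :=
  fun _ _ hab ↦ neg_le_neg_iff.1 (Tuple.monotone_sort (fun j ↦ -‖c j‖ ^ 2) hab)

lemma sum_norm_sq_le_topk {d k : ℕ} (c : Fin d → ℂ) (S : Finset (Fin d)) (hS : #S ≤ k) :
    ∑ i ∈ S, ‖c i‖ ^ 2 ≤ topk c k := by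
  set σ := Tuple.sort (fun j ↦ -‖c j‖ ^ 2)
  calc ∑ i ∈ S, ‖c i‖ ^ 2 = ∑ i ∈ S.map σ.symm.toEmbedding, sortedAbsSq c i := by
        simp [sum_map, sortedAbsSq, σ]
    _ ≤ topk c k :=
        sum_le_sum_filter_val_lt_of_antitone (antitone_sortedAbsSq c) (fun _ ↦ sq_nonneg _) _
          (by simpa using hS)

lemma norm_sq_le_topk {d k : ℕ} (c : Fin d → ℂ) (hk : 1 ≤ k) (i : Fin d) :
    ‖c i‖ ^ 2 ≤ topk c k := by
  simpa using sum_norm_sq_le_topk c {i} (by simpa using hk)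

lemma exists_card_le_sum_norm_sq_eq_topk {d : ℕ} (c : Fin d → ℂ) (k : ℕ) :
    ∃ S : Finset (Fin d), #S ≤ k ∧ ∑ i ∈ S, ‖c i‖ ^ 2 = topk c k := by
  set σ := Tuple.sort (fun j ↦ -‖c j‖ ^ 2)
  refine ⟨(univ.filter fun i : Fin d ↦ (i : ℕ) < k).map σ.toEmbedding, ?_,
    by simp [sum_map, topk, sortedAbsSq, σ]⟩
  rw [card_map]
  simpa using
    card_le_card_of_injOn Fin.val (t := range k) (by intro i; simp) Fin.val_injective.injOn

lemma norm_dotProduct_sq_le {d : ℕ} (φ ψ : Fin d → ℂ) :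
    ‖star φ ⬝ᵥ ψ‖ ^ 2 ≤ (∑ i, ‖φ i‖ ^ 2) * ∑ i with φ i ≠ 0, ‖ψ i‖ ^ 2 := by
  have hφ : ∑ i with φ i ≠ 0, ‖φ i‖ ^ 2 = ∑ i, ‖φ i‖ ^ 2 :=
    sum_filter_of_ne fun i _ h ↦ by simpa using h
  have hdot : star φ ⬝ᵥ ψ = ∑ i with φ i ≠ 0, star (φ i) * ψ i :=
    (sum_filter_of_ne fun i _ h ↦ by contrapose! h; simp [h]).symm
  rw [← hφ, hdot]
  calc ‖∑ i with φ i ≠ 0, star (φ i) * ψ i‖ ^ 2 ≤ (∑ i with φ i ≠ 0, ‖φ i‖ * ‖ψ i‖) ^ 2 := by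
        gcongr
        refine (norm_sum_le _ _).trans_eq ?_
        simp
    _ ≤ _ := sum_mul_sq_le_sq_mul_sq _ _ _

lemma exists_unit_cohRank_le_norm_dotProduct_sq_eq {d : ℕ} (ψ : Fin d → ℂ) (S : Finset (Fin d))
    (hS : 0 < ∑ i ∈ S, ‖ψ i‖ ^ 2) :
    ∃ φ : Fin d → ℂ, ∑ i, ‖φ i‖ ^ 2 = 1 ∧ cohRank φ ≤ #S ∧
      ‖star φ ⬝ᵥ ψ‖ ^ 2 = ∑ i ∈ S, ‖ψ i‖ ^ 2 := by
  set t := ∑ i ∈ S, ‖ψ i‖ ^ 2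
  set φ : Fin d → ℂ := fun i ↦ if i ∈ S then ψ i / (√t : ℝ) else 0
  have hnorm (i : Fin d) : ‖φ i‖ ^ 2 = if i ∈ S then ‖ψ i‖ ^ 2 / t else 0 := by
    split_ifs with hi <;> simp [φ, hi, div_pow, Real.sq_sqrt hS.le]
  have hdot : star φ ⬝ᵥ ψ = (√t : ℝ) := by
    have hterm (i : Fin d) :
        star (φ i) * ψ i = if i ∈ S then ((‖ψ i‖ ^ 2 / √t : ℝ) : ℂ) else 0 := by
      split_ifs with hi
      · simp [φ, hi, div_mul_eq_mul_div, Complex.conj_mul']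
      · simp [φ, hi]
    simp only [dotProduct, Pi.star_apply, hterm, sum_ite_mem, univ_inter, ← Complex.ofReal_sum,
      ← sum_div]
    exact congrArg _ (Real.div_sqrt (x := t))
  refine ⟨φ, ?_, ?_, ?_⟩
  · rw [sum_congr rfl fun i _ ↦ hnorm i, sum_ite_mem, univ_inter, ← sum_div, div_self hS.ne']
  · refine card_le_card fun i hi ↦ ?_
    by_contra h
    simp [φ, h] at hi
  · rw [hdot, Complex.norm_real, Real.norm_of_nonneg (Real.sqrt_nonneg t), Real.sq_sqrt hS.le]

theorem stmt_14_general {d k : ℕ} (hk : 1 ≤ k)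
    (ψ : Fin d → ℂ) (hψ : ∑ i, ‖ψ i‖ ^ 2 = 1) :
    (∀ φ : Fin d → ℂ, (∑ i, ‖φ i‖ ^ 2 = 1) → cohRank φ ≤ k →
        ‖dotProduct (star φ) ψ‖ ^ 2 ≤ topk ψ k) ∧
    (∃ φ : Fin d → ℂ, (∑ i, ‖φ i‖ ^ 2 = 1) ∧ cohRank φ ≤ k ∧
        ‖dotProduct (star φ) ψ‖ ^ 2 = topk ψ k) := by
  refine ⟨fun φ hφ hrank ↦ ?_, ?_⟩
  · calc ‖star φ ⬝ᵥ ψ‖ ^ 2 ≤ (∑ i, ‖φ i‖ ^ 2) * ∑ i with φ i ≠ 0, ‖ψ i‖ ^ 2 :=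
          norm_dotProduct_sq_le φ ψ
      _ ≤ topk ψ k := by rw [hφ, one_mul]; exact sum_norm_sq_le_topk ψ _ hrank
  · obtain ⟨S, hSk, hS⟩ := exists_card_le_sum_norm_sq_eq_topk ψ k
    obtain ⟨i, hi⟩ : ∃ i, ψ i ≠ 0 := by
      by_contra! h
      simp [h] at hψ
    have htopk : 0 < topk ψ k :=
      (by positivity : 0 < ‖ψ i‖ ^ 2).trans_le (norm_sq_le_topk ψ hk i)
    obtain ⟨φ, hφ, hrank, hdot⟩ := exists_unit_cohRank_le_norm_dotProduct_sq_eq ψ S (hS ▸ htopk)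
    exact ⟨φ, hφ, hrank.trans hSk, hdot.trans hS⟩

/-- For a unit vector `ψ` with coefficients `c` and any pure state `φ` of coherence rank
at most `k`, `|⟨φ|ψ⟩|² ≤ Σ_{i=1}^k |c_i↓|²`; and the bound is attained. -/
theorem stmt_14 {d k : ℕ} (hk : 1 ≤ k) (hkd : k ≤ d)
    (ψ : Fin d → ℂ) (hψ : ∑ i, ‖ψ i‖ ^ 2 = 1) :
    (∀ φ : Fin d → ℂ, (∑ i, ‖φ i‖ ^ 2 = 1) → cohRank φ ≤ k →
        ‖dotProduct (star φ) ψ‖ ^ 2 ≤ topk ψ k) ∧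
    (∃ φ : Fin d → ℂ, (∑ i, ‖φ i‖ ^ 2 = 1) ∧ cohRank φ ≤ k ∧
        ‖dotProduct (star φ) ψ‖ ^ 2 = topk ψ k) :=
  stmt_14_general hk ψ hψ
end
end

section
/- The operator W_k(ψ) = I − (Σ_{i=1}^k |c_i↓|²)^{-1} |ψ⟩⟨ψ| is a (k+1)-level coherence witness: ⟨φ|W_k(ψ)|φ⟩ ≥ 0 for every pure state φ with coherence rank at most k; and ⟨ψ|W_k(ψ)|ψ⟩ < 0 whenever ψ has coherence rank greater than k. -/
open Matrix BigOperators ComplexOrder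

noncomputable section

/-!
For `φ` supported on at most `k` coordinates, Cauchy–Schwarz on the support of `φ` gives
`|⟨ψ|φ⟩|² ≤ ∑_{i ∈ supp φ} |ψᵢ|² ≤ topk ψ k`, since by an exchange argument no `k` squared moduli
sum to more than the `k` largest ones; hence `⟨φ|W|φ⟩ = 1 - |⟨ψ|φ⟩|² / topk ψ k ≥ 0`.
If `ψ` has more than `k` nonzero coefficients, some of its mass lies outside the `k` largest, so
`0 < topk ψ k < 1` and `⟨ψ|W|ψ⟩ = 1 - 1 / topk ψ k < 0`.
-/

namespace Finset

lemma sum_le_sum_of_forall_sdiff_le {ι M : Type*} [DecidableEq ι] [AddCommMonoid M] [LinearOrder M]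
    [IsOrderedAddMonoid M] {s t : Finset ι} {f : ι → M}
    (hf : ∀ i ∈ s \ t, ∀ j ∈ t \ s, f i ≤ f j) (ht : ∀ j ∈ t \ s, 0 ≤ f j) (hst : #s ≤ #t) :
    ∑ i ∈ s, f i ≤ ∑ i ∈ t, f i := by
  have hcard : #(s \ t) ≤ #(t \ s) := card_sdiff_le_card_sdiff_iff.mpr hst
  rw [← sum_inter_add_sum_sdiff s t, ← sum_inter_add_sum_sdiff t s, inter_comm]
  refine add_le_add_right ?_ _
  obtain hts | hts := (t \ s).eq_empty_or_nonempty
  · rw [hts, card_empty, Nat.le_zero, card_eq_zero] at hcard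
    simp [hts, hcard]
  · set c := (t \ s).inf' hts f
    calc ∑ i ∈ s \ t, f i ≤ #(s \ t) • c :=
          sum_le_card_nsmul _ _ _ fun i hi => le_inf' hts _ (hf i hi)
      _ ≤ #(t \ s) • c := nsmul_le_nsmul_left (le_inf' hts _ ht) hcard
      _ ≤ ∑ j ∈ t \ s, f j := card_nsmul_le_sum _ _ _ fun j hj => inf'_le _ hj

end Finset

lemma Antitone.sum_le_sum_filter_val_lt {M : Type*} [AddCommMonoid M] [LinearOrder M]
    [IsOrderedAddMonoid M] {d k : ℕ} {h : Fin d → M} (hh : Antitone h)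
    (h0 : ∀ i, 0 ≤ h i) {s : Finset (Fin d)} (hs : s.card ≤ k) :
    ∑ i ∈ s, h i ≤ ∑ i ∈ Finset.univ.filter (fun i : Fin d => (i : ℕ) < k), h i := by
  refine Finset.sum_le_sum_of_forall_sdiff_le (fun i hi j hj => hh ?_) (fun j _ => h0 j) ?_
  · simp only [Finset.mem_sdiff, Finset.mem_filter_univ] at hi hj
    exact Fin.le_def.mpr (by omega)
  · rw [Fin.card_filter_val_lt]
    exact le_min (Finset.card_le_univ s |>.trans_eq (Fintype.card_fin d)) hs

section topk

variable {d : ℕ} (ψ : Fin d → ℂ)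

lemma sortedAbsSq_antitone : Antitone (sortedAbsSq ψ) := fun i j hij => by
  simpa [sortedAbsSq] using Tuple.monotone_sort (fun j => -‖ψ j‖ ^ 2) hij

lemma topk_eq_sum_map (k : ℕ) :
    topk ψ k = ∑ i ∈ (Finset.univ.filter (fun i : Fin d => (i : ℕ) < k)).map
      (Tuple.sort (fun j => -‖ψ j‖ ^ 2)).toEmbedding, ‖ψ i‖ ^ 2 := by
  rw [Finset.sum_map]
  rfl

lemma sum_sq_norm_le_topk {k : ℕ} {s : Finset (Fin d)} (hs : s.card ≤ k) :
    ∑ i ∈ s, ‖ψ i‖ ^ 2 ≤ topk ψ k := by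
  set σ := Tuple.sort (fun j => -‖ψ j‖ ^ 2)
  have hsum : ∑ i ∈ s, ‖ψ i‖ ^ 2 = ∑ i ∈ s.map σ.symm.toEmbedding, sortedAbsSq ψ i := by
    simp [Finset.sum_map, sortedAbsSq, σ]
  rw [hsum]
  exact (sortedAbsSq_antitone ψ).sum_le_sum_filter_val_lt (fun _ => sq_nonneg _)
    (by rwa [Finset.card_map])

lemma topk_pos {k : ℕ} (hk : 1 ≤ k) (hψ : ψ ≠ 0) : 0 < topk ψ k := by
  obtain ⟨i, hi⟩ := Function.ne_iff.mp hψ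
  calc 0 < ‖ψ i‖ ^ 2 := by positivity
    _ = ∑ j ∈ {i}, ‖ψ j‖ ^ 2 := by rw [Finset.sum_singleton]
    _ ≤ topk ψ k := sum_sq_norm_le_topk ψ (by simpa using hk)

lemma topk_lt_sum {k : ℕ} (hk : k < cohRank ψ) : topk ψ k < ∑ i, ‖ψ i‖ ^ 2 := by
  rw [topk_eq_sum_map]
  set s := (Finset.univ.filter (fun i : Fin d => (i : ℕ) < k)).map
      (Tuple.sort (fun j => -‖ψ j‖ ^ 2)).toEmbedding
  have hs : s.card < cohRank ψ := by
    rw [Finset.card_map, Fin.card_filter_val_lt]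
    exact (min_le_right _ _).trans_lt hk
  obtain ⟨i, hi, his⟩ := Finset.exists_mem_notMem_of_card_lt_card hs
  exact Finset.sum_lt_sum_of_subset (Finset.subset_univ s) (Finset.mem_univ i) his
    (pow_pos (norm_pos_iff.mpr (Finset.mem_filter.mp hi).2) 2) (fun _ _ _ => sq_nonneg _)

end topk

lemma star_dotProduct_self_eq_sum_norm_sq {ι : Type*} [Fintype ι] (v : ι → ℂ) :
    star v ⬝ᵥ v = ((∑ i, ‖v i‖ ^ 2 : ℝ) : ℂ) := by
  simp [dotProduct, Complex.conj_mul']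

lemma star_dotProduct_one_sub_smul_pureProj_mulVec {d : ℕ} (ψ φ : Fin d → ℂ) (c : ℝ) :
    star φ ⬝ᵥ ((1 - (c : ℂ) • pureProj ψ) *ᵥ φ)
      = ((∑ i, ‖φ i‖ ^ 2 - c * ‖star ψ ⬝ᵥ φ‖ ^ 2 : ℝ) : ℂ) := by
  rw [sub_mulVec, one_mulVec, dotProduct_sub, smul_mulVec, pureProj, vecMulVec_mulVec,
    op_smul_eq_smul, dotProduct_smul, dotProduct_smul, star_dotProduct_self_eq_sum_norm_sq,
    star_dotProduct φ ψ, smul_eq_mul, smul_eq_mul, Complex.star_def, Complex.mul_conj']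
  push_cast
  ring

lemma norm_star_dotProduct_sq_le {ι : Type*} [Fintype ι] (ψ φ : ι → ℂ) :
    ‖star ψ ⬝ᵥ φ‖ ^ 2 ≤ (∑ i ∈ Finset.univ.filter (fun i => φ i ≠ 0), ‖ψ i‖ ^ 2)
      * ∑ i, ‖φ i‖ ^ 2 := by
  set S := Finset.univ.filter (fun i => φ i ≠ 0)
  have hsupp : star ψ ⬝ᵥ φ = ∑ i ∈ S, star (ψ i) * φ i :=
    (Finset.sum_subset (Finset.subset_univ S) fun i _ hi => by simp_all [S]).symm
  have hφ : ∑ i ∈ S, ‖φ i‖ ^ 2 = ∑ i, ‖φ i‖ ^ 2 :=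
    Finset.sum_subset (Finset.subset_univ S) fun i _ hi => by simp_all [S]
  calc ‖star ψ ⬝ᵥ φ‖ ^ 2 ≤ (∑ i ∈ S, ‖ψ i‖ * ‖φ i‖) ^ 2 := by
        rw [hsupp]
        gcongr
        exact (norm_sum_le _ _).trans_eq (by simp)
    _ ≤ (∑ i ∈ S, ‖ψ i‖ ^ 2) * ∑ i ∈ S, ‖φ i‖ ^ 2 := Finset.sum_mul_sq_le_sq_mul_sq _ _ _
    _ = _ := by rw [hφ]

lemma norm_star_dotProduct_sq_le_topk_mul {d k : ℕ} (ψ : Fin d → ℂ) {φ : Fin d → ℂ}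
    (hφ : cohRank φ ≤ k) : ‖star ψ ⬝ᵥ φ‖ ^ 2 ≤ topk ψ k * ∑ i, ‖φ i‖ ^ 2 :=
  (norm_star_dotProduct_sq_le ψ φ).trans
    (mul_le_mul_of_nonneg_right (sum_sq_norm_le_topk ψ hφ) (by positivity))

theorem stmt_16_general {d k : ℕ} (hk : 1 ≤ k)
    (ψ : Fin d → ℂ) (hψ : ∑ i, ‖ψ i‖ ^ 2 = 1)
    (W : Matrix (Fin d) (Fin d) ℂ)
    (hWdef : W = 1 - (((topk ψ k : ℂ))⁻¹) • pureProj ψ) :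
    (∀ φ : Fin d → ℂ, (∑ i, ‖φ i‖ ^ 2 = 1) → cohRank φ ≤ k →
        0 ≤ dotProduct (star φ) (W.mulVec φ)) ∧
    (k < cohRank ψ → dotProduct (star ψ) (W.mulVec ψ) < 0) := by
  subst hWdef
  rw [← Complex.ofReal_inv]
  refine ⟨fun φ hφ hφk => ?_, fun hψk => ?_⟩
  · have hcs : ‖star ψ ⬝ᵥ φ‖ ^ 2 ≤ topk ψ k := by
      simpa only [hφ, mul_one] using norm_star_dotProduct_sq_le_topk_mul ψ hφk
    rw [star_dotProduct_one_sub_smul_pureProj_mulVec, hφ, Complex.zero_le_real, sub_nonneg]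
    exact inv_mul_le_one_of_le₀ hcs ((by positivity : (0 : ℝ) ≤ _).trans hcs)
  · have hT0 : 0 < topk ψ k := topk_pos ψ hk (by rintro rfl; simp at hψ)
    have hT1 : topk ψ k < 1 := hψ ▸ topk_lt_sum ψ hψk
    rw [star_dotProduct_one_sub_smul_pureProj_mulVec, star_dotProduct_self_eq_sum_norm_sq, hψ,
      Complex.ofReal_one, norm_one, ← Complex.ofReal_zero, Complex.real_lt_real]
    linarith [(one_lt_inv₀ hT0).mpr hT1]

/-- `W_k(ψ) = I - (Σ_{i≤k}|c_i↓|²)⁻¹ |ψ⟩⟨ψ|` is a `(k+1)`-level coherence witness,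
which detects the multilevel coherence of `ψ` when `ψ` has coherence rank `> k`. -/
theorem stmt_16 {d k : ℕ} (hk : 1 ≤ k) (hkd : k ≤ d)
    (ψ : Fin d → ℂ) (hψ : ∑ i, ‖ψ i‖ ^ 2 = 1) (hrank : k ≤ cohRank ψ)
    (W : Matrix (Fin d) (Fin d) ℂ)
    (hWdef : W = 1 - (((topk ψ k : ℂ))⁻¹) • pureProj ψ) :
    (∀ φ : Fin d → ℂ, (∑ i, ‖φ i‖ ^ 2 = 1) → cohRank φ ≤ k →
        0 ≤ dotProduct (star φ) (W.mulVec φ)) ∧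
    (k < cohRank ψ → dotProduct (star ψ) (W.mulVec ψ) < 0) :=
  stmt_16_general hk ψ hψ W hWdef
end
end
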